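/- Let (X, 𝒰) be a uniform space and f : (X, 𝒰) → (X, 𝒰) continuous. Then the Zadeh extension f̂ : (ℱ(X), 𝒰_S) → (ℱ(X), 𝒰_S) is continuous, where 𝒰_S is the sendograph uniformity. -/

import Mathlib

open Set Filter Topology
open scoped Uniformity

/-- The α-cut of a fuzzy set: `{x | α ≤ u x}` for `α ≠ 0`, and the support
(closure of `{x | 0 < u x}`) for `α = 0`. -/
noncomputable def fuzzyCut {X : Type*} [TopologicalSpace X] (u : X → ℝ) (α : ℝ) : Set X :=
  if α = 0 then closure {x | 0 < u x} else {x | α ≤ u x}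

/-- `u` belongs to `ℱ(X)`: a normal upper semicontinuous `[0,1]`-valued fuzzy set
with compact support. -/
structure IsFuzzySet {X : Type*} [TopologicalSpace X] (u : X → ℝ) : Prop where
  mem_Icc : ∀ x, u x ∈ Set.Icc (0:ℝ) 1
  usc : UpperSemicontinuous u
  normal : ∃ x, u x = 1
  compact_supp : IsCompact (closure {x | 0 < u x})

/-- The Zadeh extension of `f`: `x ↦ sup {u z : f z = x}` (and `0` when the
preimage is empty, since `sSup ∅ = 0` in `ℝ`). -/
noncomputable def zadeh {X : Type*} (f : X → X) (u : X → ℝ) : X → ℝ :=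
  fun x => sSup (u '' (f ⁻¹' {x}))

/-- `W(A) = ⋃ a ∈ A, W(a)` where `W(a) = {y | (a, y) ∈ W}`. -/
def ballImage {Y : Type*} (W : Set (Y × Y)) (A : Set Y) : Set Y :=
  {y | ∃ a ∈ A, (a, y) ∈ W}

/-- The Hausdorff entourage relation `𝒦[W]`: `(A,B) ∈ 𝒦[W]` iff `A ⊆ W(B)` and `B ⊆ W(A)`. -/
def KRel {Y : Type*} (W : Set (Y × Y)) (A B : Set Y) : Prop :=
  A ⊆ ballImage W B ∧ B ⊆ ballImage W A

/-- The level-wise entourage relation `ℱ[W]`: `(u_α, v_α) ∈ 𝒦[W]` for all `α ∈ [0,1]`. -/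
def FRel {X : Type*} [TopologicalSpace X] (W : Set (X × X)) (u v : X → ℝ) : Prop :=
  ∀ α ∈ Set.Icc (0:ℝ) 1, KRel W (fuzzyCut u α) (fuzzyCut v α)

/-- The Skorokhod entourage relation `G[W, ε]`: there is an increasing homeomorphism `t`
of `[0,1]` with `‖t‖ < ε` and `(u_α, v_{t α}) ∈ 𝒦[W]` for all `α ∈ [0,1]`. -/
def SkoRel {X : Type*} [TopologicalSpace X] (W : Set (X × X)) (ε : ℝ) (u v : X → ℝ) : Prop :=
  ∃ t : ℝ → ℝ, StrictMonoOn t (Set.Icc 0 1) ∧ t 0 = 0 ∧ t 1 = 1 ∧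
    Set.MapsTo t (Set.Icc 0 1) (Set.Icc 0 1) ∧ Set.SurjOn t (Set.Icc 0 1) (Set.Icc 0 1) ∧
    (∀ α ∈ Set.Icc (0:ℝ) 1, |t α - α| < ε) ∧
    (∀ α ∈ Set.Icc (0:ℝ) 1, KRel W (fuzzyCut u α) (fuzzyCut v (t α)))

/-- The sendograph of `u`: `end(u) ∩ (u₀ × [0,1])`. -/
noncomputable def send {X : Type*} [TopologicalSpace X] (u : X → ℝ) : Set (X × ℝ) :=
  {p | p.1 ∈ fuzzyCut u 0 ∧ p.2 ∈ Set.Icc (0:ℝ) 1 ∧ p.2 ≤ u p.1}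

/-- The product entourage `U × V_ε` on `X × [0,1]`. -/
def prodEnt {X : Type*} (U : Set (X × X)) (ε : ℝ) : Set ((X × ℝ) × (X × ℝ)) :=
  {p | (p.1.1, p.2.1) ∈ U ∧ |p.1.2 - p.2.2| < ε}

/-- The sendograph entourage relation `S[U, ε]`. -/
noncomputable def SendRel {X : Type*} [TopologicalSpace X] (U : Set (X × X)) (ε : ℝ)
    (u v : X → ℝ) : Prop :=
  KRel (prodEnt U ε) (send u) (send v)

/-- `u_{α⁺} = closure (⋃ β ∈ (α, 1], u_β)`, the right limit of the level map. -/
noncomputable def cutPlus {X : Type*} [TopologicalSpace X] (u : X → ℝ) (α : ℝ) : Set X :=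
  closure (⋃ β ∈ Set.Ioc α 1, fuzzyCut u β)

/-- `B` belongs to the Vietoris basic open set `⟨V 0, …, V (k-1)⟩`. -/
def inVietoris {Y : Type*} (B : Set Y) (k : ℕ) (V : Fin k → Set Y) : Prop :=
  B ⊆ (⋃ i, V i) ∧ ∀ i, (B ∩ V i).Nonempty

/-! The sendograph of `f̂ u` lies between the image of `send u` under `f × id` and the closure
of that image, so up to an arbitrarily small entourage it is that image. Near the compact
support of `u`, `f` is uniformly continuous, so `f × id` maps `S[V, δ]`-close sendographs to
`S[U, δ]`-close images. -/

section Hausdorff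

variable {Y Z : Type*}

lemma ballImage_eq_image (W : Set (Y × Y)) (A : Set Y) : ballImage W A = SetRel.image W A := rfl

lemma KRel.mono {W W' : Set (Y × Y)} {A B : Set Y} (h : KRel W A B) (hW : W ⊆ W') :
    KRel W' A B :=
  ⟨h.1.trans (SetRel.image_subset_image_left hW), h.2.trans (SetRel.image_subset_image_left hW)⟩

lemma KRel.image {g : Y → Z} {W : Set (Y × Y)} {W' : Set (Z × Z)} {A B : Set Y}
    (hg : ∀ a ∈ A, ∀ y,
      ((a, y) ∈ W → (g a, g y) ∈ W') ∧ ((y, a) ∈ W → (g y, g a) ∈ W'))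
    (h : KRel W A B) : KRel W' (g '' A) (g '' B) := by
  constructor
  · rintro _ ⟨a, ha, rfl⟩
    obtain ⟨b, hb, hba⟩ := h.1 ha
    exact ⟨g b, mem_image_of_mem g hb, (hg a ha b).2 hba⟩
  · rintro _ ⟨b, hb, rfl⟩
    obtain ⟨a, ha, hab⟩ := h.2 hb
    exact ⟨g a, mem_image_of_mem g ha, (hg a ha b).1 hab⟩

lemma KRel.of_subset_closure [UniformSpace Y] {W₁ W₂ : Set (Y × Y)} {A B A' B' : Set Y}
    (h : KRel W₁ A' B') (hA' : A' ⊆ A) (hA : A ⊆ closure A') (hB' : B' ⊆ B)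
    (hB : B ⊆ closure B') (hW₂ : W₂ ∈ 𝓤 Y) : KRel (SetRel.comp W₁ W₂) A B := by
  simp only [KRel, ballImage_eq_image, SetRel.image_comp] at h ⊢
  constructor
  · calc A ⊆ SetRel.image W₂ A' := hA.trans (UniformSpace.closure_subset_image hW₂ A')
      _ ⊆ _ := SetRel.image_subset_image (h.1.trans (SetRel.image_subset_image hB'))
  · calc B ⊆ SetRel.image W₂ B' := hB.trans (UniformSpace.closure_subset_image hW₂ B')
      _ ⊆ _ := SetRel.image_subset_image (h.2.trans (SetRel.image_subset_image hA'))

end Hausdorff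

section ProdEnt

variable {X : Type*}

lemma prodEnt_mem_uniformity [UniformSpace X] {U : Set (X × X)} (hU : U ∈ 𝓤 X) {ε : ℝ}
    (hε : 0 < ε) : prodEnt U ε ∈ 𝓤 (X × ℝ) := by
  rw [uniformity_prod]
  exact inter_mem_inf (preimage_mem_comap hU) (preimage_mem_comap (Metric.dist_mem_uniformity hε))

lemma comp_prodEnt_subset (U U' : Set (X × X)) (ε ε' : ℝ) :
    SetRel.comp (prodEnt U ε) (prodEnt U' ε') ⊆ prodEnt (SetRel.comp U U') (ε + ε') := by
  rintro ⟨p, r⟩ ⟨q, ⟨hpq, hpq'⟩, ⟨hqr, hqr'⟩⟩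
  refine ⟨⟨q.1, hpq, hqr⟩, ?_⟩
  calc |p.2 - r.2| ≤ |p.2 - q.2| + |q.2 - r.2| := abs_sub_le _ _ _
    _ < ε + ε' := add_lt_add hpq' hqr'

lemma exists_mem_uniformity_map_mem_of_isCompact [UniformSpace X] {f : X → X} {K : Set X}
    (hK : IsCompact K) (hf : Continuous f) {U : Set (X × X)} (hU : U ∈ 𝓤 X) :
    ∃ V ∈ 𝓤 X, ∀ a ∈ K, ∀ y,
      ((a, y) ∈ V → (f a, f y) ∈ U) ∧ ((y, a) ∈ V → (f y, f a) ∈ U) := by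
  obtain ⟨U₁, hU₁, hU₁symm, hU₁U⟩ := comp_symm_mem_uniformity_sets hU
  have hU₁U : U₁ ⊆ U := (subset_comp_self_of_mem_uniformity hU₁).trans hU₁U
  have hV := hK.uniformContinuousAt_of_continuousAt f (fun a _ => hf.continuousAt) hU₁
  refine ⟨_, symmetrize_mem_uniformity hV, fun a ha y => ⟨fun hay => hU₁U (hay.1 ha),
    fun hya => hU₁U (hU₁symm.symm _ _ (hya.2 ha))⟩⟩

lemma KRel.image_prodMap [UniformSpace X] {f : X → X} {K : Set X} {V U : Set (X × X)}
    {δ : ℝ} {A B : Set (X × ℝ)} (hAK : ∀ p ∈ A, p.1 ∈ K)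
    (hVU : ∀ a ∈ K, ∀ y,
      ((a, y) ∈ V → (f a, f y) ∈ U) ∧ ((y, a) ∈ V → (f y, f a) ∈ U))
    (h : KRel (prodEnt V δ) A B) :
    KRel (prodEnt U δ) (Prod.map f id '' A) (Prod.map f id '' B) :=
  h.image fun p hp _ => ⟨fun hpq => ⟨(hVU _ (hAK p hp) _).1 hpq.1, hpq.2⟩,
    fun hqp => ⟨(hVU _ (hAK p hp) _).2 hqp.1, hqp.2⟩⟩

end ProdEnt

section Zadeh

variable {X : Type*} {f : X → X} {u : X → ℝ}

lemma le_zadeh (hu : BddAbove (range u)) (z : X) : u z ≤ zadeh f u (f z) :=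
  le_csSup (hu.mono (image_subset_range _ _)) ⟨z, rfl, rfl⟩

lemma exists_lt_of_lt_zadeh {x : X} {t : ℝ} (ht₀ : 0 ≤ t) (ht : t < zadeh f u x) :
    ∃ z, f z = x ∧ t < u z := by
  have hne : (u '' (f ⁻¹' {x})).Nonempty := by
    by_contra hempty
    rw [not_nonempty_iff_eq_empty] at hempty
    rw [zadeh, hempty, Real.sSup_empty] at ht
    linarith
  obtain ⟨_, ⟨z, hz, rfl⟩, hlt⟩ := exists_lt_of_lt_csSup hne ht
  exact ⟨z, hz, hlt⟩

variable [TopologicalSpace X]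

lemma IsFuzzySet.bddAbove_range (hu : IsFuzzySet u) : BddAbove (range u) :=
  ⟨1, by rintro _ ⟨x, rfl⟩; exact (hu.mem_Icc x).2⟩

lemma fuzzyCut_zero : fuzzyCut u 0 = closure {x | 0 < u x} := if_pos rfl

lemma image_send_subset_send_zadeh (hf : Continuous f) (hu : BddAbove (range u)) :
    Prod.map f id '' send u ⊆ send (zadeh f u) := by
  rintro _ ⟨⟨a, t⟩, ⟨ha, ht, hle⟩, rfl⟩
  refine ⟨?_, ht, hle.trans (le_zadeh hu a)⟩
  have hsupp : f '' {z | 0 < u z} ⊆ {x | 0 < zadeh f u x} := by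
    rintro _ ⟨z, hz, rfl⟩
    exact hz.trans_le (le_zadeh hu z)
  rw [fuzzyCut_zero] at ha ⊢
  exact closure_mono hsupp (image_closure_subset_closure_image hf ⟨a, ha, rfl⟩)

lemma mk_mem_image_send_of_lt_zadeh {x : X} {t : ℝ} (ht₀ : 0 ≤ t) (ht₁ : t ≤ 1)
    (ht : t < zadeh f u x) : (x, t) ∈ Prod.map f id '' send u := by
  obtain ⟨z, rfl, hz⟩ := exists_lt_of_lt_zadeh ht₀ ht
  refine ⟨(z, t), ⟨?_, ⟨ht₀, ht₁⟩, hz.le⟩, rfl⟩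
  rw [fuzzyCut_zero]
  exact subset_closure (ht₀.trans_lt hz)

/-- The point `(x, t)` is a limit of points `(x', 0)` with `0 < f̂ u x'` if `t = 0`, and of the
points `(x, s)`, `0 ≤ s < t`, otherwise. -/
lemma send_zadeh_subset_closure :
    send (zadeh f u) ⊆ closure (Prod.map f id '' send u) := by
  rintro ⟨x, t⟩ ⟨hx, ⟨ht₀, ht₁⟩, hle⟩
  rcases ht₀.eq_or_lt with rfl | ht₀
  · have hsub : {x' | 0 < zadeh f u x'} ×ˢ {(0 : ℝ)} ⊆ Prod.map f id '' send u := by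
      rintro ⟨x', _⟩ ⟨hx', rfl⟩
      exact mk_mem_image_send_of_lt_zadeh le_rfl zero_le_one hx'
    refine closure_mono hsub ?_
    rw [fuzzyCut_zero] at hx
    rw [closure_prod_eq]
    exact ⟨hx, subset_closure rfl⟩
  · have hsub : {x} ×ˢ Ico 0 t ⊆ Prod.map f id '' send u := by
      rintro ⟨_, s⟩ ⟨rfl, hs₀, hst⟩
      exact mk_mem_image_send_of_lt_zadeh hs₀ (hst.le.trans ht₁) (hst.trans_le hle)
    refine closure_mono hsub ?_
    rw [closure_prod_eq, closure_Ico ht₀.ne]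
    exact ⟨subset_closure rfl, ht₀.le, le_rfl⟩

end Zadeh

/-- Continuity of the Zadeh extension with respect to the sendograph uniformity `𝒰_S`:
for each `u ∈ ℱ(X)` and each basic entourage `S[U, ε]`, there are `V ∈ 𝒰` and `δ > 0` such
that the basic ball `S[V, δ](u)` is mapped into `S[U, ε](f̂ u)`. -/
theorem stmt11 {X : Type*} [UniformSpace X] {f : X → X} (hf : Continuous f) :
    ∀ u : X → ℝ, IsFuzzySet u → ∀ U ∈ 𝓤 X, ∀ ε > (0:ℝ), ∃ V ∈ 𝓤 X, ∃ δ > (0:ℝ),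
      ∀ v : X → ℝ, IsFuzzySet v → SendRel V δ u v →
        SendRel U ε (zadeh f u) (zadeh f v) := by
  intro u hu U hU ε hε
  obtain ⟨U₁, hU₁, hU₁U⟩ := comp_mem_uniformity_sets hU
  have hK : IsCompact (fuzzyCut u 0) := by rw [fuzzyCut_zero]; exact hu.compact_supp
  obtain ⟨V, hV, hVU₁⟩ := exists_mem_uniformity_map_mem_of_isCompact hK hf hU₁
  refine ⟨V, hV, ε / 2, half_pos hε, fun v hv huv => ?_⟩
  have himage : KRel (prodEnt U₁ (ε / 2)) (Prod.map f id '' send u) (Prod.map f id '' send v) :=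
    KRel.image_prodMap (fun p hp => hp.1) hVU₁ huv
  have hclose := himage.of_subset_closure (image_send_subset_send_zadeh hf hu.bddAbove_range)
    send_zadeh_subset_closure (image_send_subset_send_zadeh hf hv.bddAbove_range)
    send_zadeh_subset_closure (prodEnt_mem_uniformity hU₁ (half_pos hε))
  refine hclose.mono ((comp_prodEnt_subset _ _ _ _).trans fun p hp => ⟨hU₁U hp.1, ?_⟩)
  simpa using hp.2
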